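/- The Basilica group 𝓑 is not a branch group: there exist no spherically homogeneous rooted tree T and branch group G ≤ Aut(T) such that G is isomorphic to 𝓑. -/

import Mathlib

open Equiv

namespace PaperDefs

/-! ### Spherically homogeneous rooted trees -/

variable (A : ℕ → Type)

/-- Vertices of the spherically homogeneous rooted tree determined by the
sequence of alphabets `A`: words `a₁a₂⋯aₙ` with `aᵢ ∈ A i`. -/
def Vertex : Type := Σ n : ℕ, ∀ i : Fin n, A i

/-- The prefix relation on vertices. -/
def IsPref (v w : Vertex A) : Prop :=
  ∃ h : v.1 ≤ w.1, ∀ i : Fin v.1, v.2 i = w.2 (Fin.castLE h i)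

/-- The automorphism group of the tree: permutations of the vertex set that
preserve the prefix relation. -/
def treeAut : Subgroup (Perm (Vertex A)) where
  carrier := {g | ∀ v w, IsPref A v w ↔ IsPref A (g v) (g w)}
  one_mem' := by intro v w; simp
  mul_mem' := by
    intro a b ha hb v w
    simpa [Equiv.Perm.mul_apply] using (hb v w).trans (ha (b v) (b w))
  inv_mem' := by
    intro a ha v w
    simpa using (ha (a⁻¹ v) (a⁻¹ w)).symm

/-- The stabiliser of the vertex `v` in `G`. -/
def stG (G : Subgroup (Perm (Vertex A))) (v : Vertex A) : Subgroup (Perm (Vertex A)) :=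
  G ⊓ MulAction.stabilizer (Perm (Vertex A)) v

/-- The rigid stabiliser of the vertex `v` in `G`: elements of `G` fixing every
vertex that does not have `v` as a prefix. -/
def rist (G : Subgroup (Perm (Vertex A))) (v : Vertex A) : Subgroup (Perm (Vertex A)) where
  carrier := {g | g ∈ G ∧ ∀ w, ¬ IsPref A v w → g w = w}
  one_mem' := ⟨G.one_mem, fun w _ => by simp⟩
  mul_mem' := by
    rintro a b ⟨haG, ha⟩ ⟨hbG, hb⟩
    refine ⟨G.mul_mem haG hbG, fun w hw => ?_⟩
    simp [Equiv.Perm.mul_apply, hb w hw, ha w hw]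
  inv_mem' := by
    rintro a ⟨haG, ha⟩
    refine ⟨G.inv_mem haG, fun w hw => ?_⟩
    conv_lhs => rw [← ha w hw]
    simp

/-- The rigid stabiliser of the `n`-th level: the subgroup generated by the rigid
stabilisers of the vertices of level `n`. -/
def ristLevel (G : Subgroup (Perm (Vertex A))) (n : ℕ) : Subgroup (Perm (Vertex A)) :=
  ⨆ (v : Vertex A) (_ : v.1 = n), rist A G v

/-- `G` acts spherically transitively: transitively on every level. -/
def SphTrans (G : Subgroup (Perm (Vertex A))) : Prop :=
  ∀ v w : Vertex A, v.1 = w.1 → ∃ g ∈ G, g v = w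

/-- `G ≤ Aut T` is a weakly branch group. -/
def IsWeaklyBranch (G : Subgroup (Perm (Vertex A))) : Prop :=
  G ≤ treeAut A ∧ SphTrans A G ∧ ∀ v : Vertex A, rist A G v ≠ ⊥

/-- `G ≤ Aut T` is a branch group. -/
def IsBranch (G : Subgroup (Perm (Vertex A))) : Prop :=
  IsWeaklyBranch A G ∧ ∀ n : ℕ, (ristLevel A G n).relIndex G ≠ 0

/-! ### Boundary of the tree -/

/-- The boundary of the tree: infinite words. -/
def Boundary : Type := ∀ i : ℕ, A i

/-- The length-`n` prefix of a boundary point. -/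
def bdryPrefix (ξ : Boundary A) (n : ℕ) : Vertex A := ⟨n, fun i => ξ i⟩

/-- The support of a subgroup `H` on the boundary: boundary points moved by some
element of `H` (a boundary point is moved by a tree automorphism iff one of its
finite prefixes is moved). -/
def supp (H : Subgroup (Perm (Vertex A))) : Set (Boundary A) :=
  {ξ | ∃ h ∈ H, ∃ n : ℕ, h (bdryPrefix A ξ n) ≠ bdryPrefix A ξ n}

/-! ### Sections / projections -/

/-- The shifted alphabet sequence, describing the subtree rooted at a vertex of
level `n`. -/
def shift (n : ℕ) : ℕ → Type := fun i => A (i + n)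

/-- Concatenation of a vertex `v` of level `n` with a vertex of the subtree `T_v`
(viewed in the shifted tree). -/
def concat (n : ℕ) (v : Vertex A) (hv : v.1 = n) (w : Vertex (shift A n)) : Vertex A :=
  ⟨n + w.1, fun i =>
    if h : (i : ℕ) < n then v.2 ⟨(i : ℕ), by omega⟩
    else cast (congrArg A (by have := i.isLt; omega : (i : ℕ) - n + n = (i : ℕ)))
      (w.2 ⟨(i : ℕ) - n, by have := i.isLt; omega⟩)⟩

/-- `projStab A G n v hv` is `G_v = φ_v(St_G(v))`, the image under the projection
`φ_v` of the stabiliser of `v` in `G`, realised as a subgroup of the automorphisms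
of the subtree `T_v` (identified with the tree on the shifted alphabet sequence):
it consists of those `σ` for which some `g ∈ G` stabilises `v` and satisfies
`g (v·w) = v·(σ w)` for every vertex `w` of the subtree. -/
def projStab (G : Subgroup (Perm (Vertex A))) (n : ℕ) (v : Vertex A) (hv : v.1 = n) :
    Subgroup (Perm (Vertex (shift A n))) where
  carrier := {σ | ∃ g ∈ G, g v = v ∧ ∀ w, g (concat A n v hv w) = concat A n v hv (σ w)}
  one_mem' := ⟨1, G.one_mem, by simp, fun w => by simp⟩
  mul_mem' := by
    rintro σ τ ⟨g, hgG, hgv, hg⟩ ⟨g', hg'G, hg'v, hg'⟩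
    refine ⟨g * g', G.mul_mem hgG hg'G, by simp [Equiv.Perm.mul_apply, hg'v, hgv], fun w => ?_⟩
    simp [Equiv.Perm.mul_apply, hg' w, hg (τ w)]
  inv_mem' := by
    rintro σ ⟨g, hgG, hgv, hg⟩
    refine ⟨g⁻¹, G.inv_mem hgG, by simpa using (congrArg (⇑g⁻¹) hgv).symm, fun w => ?_⟩
    have h1 : g (concat A n v hv (σ⁻¹ w)) = concat A n v hv w := by
      rw [hg (σ⁻¹ w)]; simp
    calc g⁻¹ (concat A n v hv w) = g⁻¹ (g (concat A n v hv (σ⁻¹ w))) := by rw [h1]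
      _ = concat A n v hv (σ⁻¹ w) := by simp

/-! ### Group-theoretic notions -/

/-- `H` is a normal subgroup of `K` (both being subgroups of an ambient group). -/
def NormalIn {P : Type*} [Group P] (H K : Subgroup P) : Prop :=
  H ≤ K ∧ ∀ k ∈ K, ∀ h ∈ H, k * h * k⁻¹ ∈ H

/-- `H` is `k`-subnormal in `G`: there is a chain `H = c k ⊴ ⋯ ⊴ c 0 = G`. -/
def SubnormalIn {P : Type*} [Group P] (H G : Subgroup P) (k : ℕ) : Prop :=
  ∃ c : ℕ → Subgroup P, c 0 = G ∧ c k = H ∧ ∀ i < k, NormalIn (c (i + 1)) (c i)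

/-- The iterated derived subgroup `H⁽ᵏ⁾` of a subgroup `H` of an ambient group. -/
def derivedIter {P : Type*} [Group P] (H : Subgroup P) : ℕ → Subgroup P
  | 0 => H
  | k + 1 => ⁅derivedIter H k, derivedIter H k⁆

/-- The class `𝓜𝓕` of groups all of whose maximal subgroups have finite index. -/
def MF (Γ : Type*) [Group Γ] : Prop :=
  ∀ M : Subgroup Γ, IsCoatom M → M.index ≠ 0

/-- Every proper quotient of `Γ` belongs to `𝓜𝓕`. -/
def QuotientsMF (Γ : Type*) [Group Γ] : Prop :=
  ∀ (N : Subgroup Γ) [N.Normal], N ≠ ⊥ → MF (Γ ⧸ N)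

/-- `H` is a prodense subgroup of `Γ`: `HN = Γ` for every nontrivial normal `N ⊴ Γ`. -/
def Prodense {Γ : Type*} [Group Γ] (H : Subgroup Γ) : Prop :=
  ∀ N : Subgroup Γ, N.Normal → N ≠ ⊥ → H ⊔ N = ⊤

/-- `H` is a prodense subgroup of `G`, both being subgroups of an ambient group:
`H ≤ G` and `HN = G` for every nontrivial subgroup `N ≤ G` normal in `G`. -/
def ProdenseIn {P : Type*} [Group P] (H G : Subgroup P) : Prop :=
  H ≤ G ∧ ∀ N : Subgroup P, N ≤ G → NormalIn N G → N ≠ ⊥ → H ⊔ N = G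

/-- `M` is a maximal subgroup of `G` (both subgroups of an ambient group). -/
def MaximalIn {P : Type*} [Group P] (M G : Subgroup P) : Prop :=
  M < G ∧ ∀ K : Subgroup P, M < K → K ≤ G → K = G

/-! ### Regular rooted trees `X*` (vertices = finite words = lists) -/

variable (X : Type)

/-- The automorphism group of the regular rooted tree `X*`: permutations of the
set of finite words preserving the prefix relation. -/
def treeAutL : Subgroup (Perm (List X)) where
  carrier := {g | ∀ v w : List X, v <+: w ↔ g v <+: g w}
  one_mem' := by intro v w; simp
  mul_mem' := by
    intro a b ha hb v w
    simpa [Equiv.Perm.mul_apply] using (hb v w).trans (ha (b v) (b w))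
  inv_mem' := by
    intro a ha v w
    simpa using (ha (a⁻¹ v) (a⁻¹ w)).symm

/-- The rigid stabiliser of the vertex `v ∈ X*` in `H`. -/
def ristL (H : Subgroup (Perm (List X))) (v : List X) : Subgroup (Perm (List X)) where
  carrier := {g | g ∈ H ∧ ∀ w, ¬ v <+: w → g w = w}
  one_mem' := ⟨H.one_mem, fun w _ => by simp⟩
  mul_mem' := by
    rintro a b ⟨haG, ha⟩ ⟨hbG, hb⟩
    refine ⟨H.mul_mem haG hbG, fun w hw => ?_⟩
    simp [Equiv.Perm.mul_apply, hb w hw, ha w hw]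
  inv_mem' := by
    rintro a ⟨haG, ha⟩
    refine ⟨H.inv_mem haG, fun w hw => ?_⟩
    conv_lhs => rw [← ha w hw]
    simp

/-- The rigid stabiliser of the `n`-th level. -/
def ristLevelL (H : Subgroup (Perm (List X))) (n : ℕ) : Subgroup (Perm (List X)) :=
  ⨆ (v : List X) (_ : v.length = n), ristL X H v

/-- Spherically transitive action on `X*`. -/
def SphTransL (G : Subgroup (Perm (List X))) : Prop :=
  ∀ v w : List X, v.length = w.length → ∃ g ∈ G, g v = w

/-- `G ≤ Aut(X*)` is a weakly branch group. -/
def IsWeaklyBranchL (G : Subgroup (Perm (List X))) : Prop :=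
  G ≤ treeAutL X ∧ SphTransL X G ∧ ∀ v : List X, ristL X G v ≠ ⊥

/-- `projL X v H = φ_v(St_H(v))`: the image under the projection `φ_v` of the
stabiliser of `v` in `H`, where the subtree at `v` is identified with `X*` itself;
it consists of those `σ` for which some `g ∈ H` satisfies `g (v·w) = v·(σ w)`
for every word `w`. -/
def projL (v : List X) (H : Subgroup (Perm (List X))) : Subgroup (Perm (List X)) where
  carrier := {σ | ∃ g ∈ H, ∀ w : List X, g (v ++ w) = v ++ σ w}
  one_mem' := ⟨1, H.one_mem, fun w => by simp⟩
  mul_mem' := by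
    rintro σ τ ⟨g, hgH, hg⟩ ⟨g', hg'H, hg'⟩
    exact ⟨g * g', H.mul_mem hgH hg'H, fun w => by
      simp [Equiv.Perm.mul_apply, hg' w, hg (τ w)]⟩
  inv_mem' := by
    rintro σ ⟨g, hgH, hg⟩
    refine ⟨g⁻¹, H.inv_mem hgH, fun w => ?_⟩
    have h1 : g (v ++ σ⁻¹ w) = v ++ w := by
      rw [hg (σ⁻¹ w)]; simp
    calc g⁻¹ (v ++ w) = g⁻¹ (g (v ++ σ⁻¹ w)) := by rw [h1]
      _ = v ++ σ⁻¹ w := by simp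

/-- `G ≤ Aut(X*)` is self-similar: `G_v ≤ G` for every vertex. -/
def SelfSimilarL (G : Subgroup (Perm (List X))) : Prop :=
  ∀ v : List X, projL X v G ≤ G

/-! ### The Basilica group -/

mutual
  /-- The generator `a` of the Basilica group, as a function on words. -/
  def aF : List Bool → List Bool
    | [] => []
    | false :: w => false :: w
    | true :: w => true :: bF w
  /-- The generator `b` of the Basilica group, as a function on words. -/
  def bF : List Bool → List Bool
    | [] => []
    | false :: w => true :: aF w
    | true :: w => false :: w
end

mutual
  /-- The inverse of `aF`. -/
  def aI : List Bool → List Bool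
    | [] => []
    | false :: w => false :: w
    | true :: w => true :: bI w
  /-- The inverse of `bF`. -/
  def bI : List Bool → List Bool
    | [] => []
    | false :: w => true :: w
    | true :: w => false :: aI w
end

mutual
  theorem aI_aF : ∀ w, aI (aF w) = w
    | [] => rfl
    | false :: _ => rfl
    | true :: w => by simp [aF, aI, bI_bF w]
  theorem bI_bF : ∀ w, bI (bF w) = w
    | [] => rfl
    | false :: w => by simp [bF, bI, aI_aF w]
    | true :: _ => rfl
end

mutual
  theorem aF_aI : ∀ w, aF (aI w) = w
    | [] => rfl
    | false :: _ => rfl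
    | true :: w => by simp [aI, aF, bF_bI w]
  theorem bF_bI : ∀ w, bF (bI w) = w
    | [] => rfl
    | false :: _ => by simp [bI, bF]
    | true :: w => by simp [bI, bF, aF_aI w]
end

/-- The generator `a` of the Basilica group. -/
def aP : Perm (List Bool) := ⟨aF, aI, aI_aF, aF_aI⟩

/-- The generator `b` of the Basilica group. -/
def bP : Perm (List Bool) := ⟨bF, bI, bI_bF, bF_bI⟩

/-- The Basilica group `𝓑 = ⟨a, b⟩ ≤ Aut({0,1}*)`. -/
def BasilicaGroup : Subgroup (Perm (List Bool)) := Subgroup.closure {aP, bP}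

/-- The image of a subgroup of the first-level stabiliser under
`ψ₁ = (φ₀, φ₁)`: pairs `(σ₀, σ₁)` arising as the pair of first-level sections of
some `g ∈ H`. -/
def psi1Image (H : Subgroup (Perm (List Bool))) :
    Subgroup (Perm (List Bool) × Perm (List Bool)) where
  carrier := {p | ∃ g ∈ H, ∀ w : List Bool,
      g (false :: w) = false :: p.1 w ∧ g (true :: w) = true :: p.2 w}
  one_mem' := ⟨1, H.one_mem, fun w => by simp⟩
  mul_mem' := by
    rintro p q ⟨g, hgH, hg⟩ ⟨g', hg'H, hg'⟩
    refine ⟨g * g', H.mul_mem hgH hg'H, fun w => ⟨?_, ?_⟩⟩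
    · simp [Equiv.Perm.mul_apply, (hg' w).1, (hg (q.1 w)).1]
    · simp [Equiv.Perm.mul_apply, (hg' w).2, (hg (q.2 w)).2]
  inv_mem' := by
    rintro p ⟨g, hgH, hg⟩
    refine ⟨g⁻¹, H.inv_mem hgH, fun w => ⟨?_, ?_⟩⟩
    · have h1 : g (false :: p.1⁻¹ w) = false :: w := by
        rw [(hg (p.1⁻¹ w)).1]; simp
      have h2 : g⁻¹ (false :: w) = false :: p.1⁻¹ w := by
        rw [← h1]; simp
      simpa using h2
    · have h1 : g (true :: p.2⁻¹ w) = true :: w := by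
        rw [(hg (p.2⁻¹ w)).2]; simp
      have h2 : g⁻¹ (true :: w) = true :: p.2⁻¹ w := by
        rw [← h1]; simp
      simpa using h2

/-!
The exponent sums of `a` and `b` define a homomorphism `χ : 𝓑 → ℤ²`; it is well defined because
a word fixing the first `2k` levels has both exponent sums divisible by `2^k`. Commuting elements
of `𝓑` have linearly dependent images under `χ`: by induction on word length one passes to
first-level sections or, when both elements swap the two subtrees, to their first-return maps on
the subtree at `0`. If the latter never ends, one element acts as an odometer, the other agrees
with one of its powers on every level, and the determinant is divisible by every power of `2`.

If `𝓑` were a branch group `G`, the `χ`-images of the rigid stabilisers of the first-level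
vertices would coincide (they are conjugate and `ℤ²` is abelian) and have finite index (they
generate `rist_G(1)`). Independent vectors in this common image, lifted to the rigid stabilisers
of two distinct first-level vertices, give commuting elements with independent images.
-/

def wedge (p q : ℤ × ℤ) : ℤ := p.1 * q.2 - p.2 * q.1

theorem wedge_comm (p q : ℤ × ℤ) : wedge q p = -wedge p q := by
  simp only [wedge]; ring

theorem wedge_swap (p q : ℤ × ℤ) : wedge p.swap q.swap = -wedge p q := by
  simp only [wedge, Prod.fst_swap, Prod.snd_swap]; ring

theorem exists_wedge_ne_zero_of_index_ne_zero {L : Subgroup (Multiplicative (ℤ × ℤ))}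
    (hL : L.index ≠ 0) : ∃ p ∈ L, ∃ q ∈ L, wedge p.toAdd q.toAdd ≠ 0 :=
  ⟨.ofAdd (1, 0) ^ L.index, L.pow_index_mem _, .ofAdd (0, 1) ^ L.index, L.pow_index_mem _,
    by simp [wedge, hL]⟩

theorem eq_zero_of_forall_two_pow_dvd {n : ℤ} (h : ∀ k : ℕ, (2 : ℤ) ^ k ∣ n) : n = 0 := by
  by_contra hn
  obtain ⟨k, hk⟩ := (Int.finiteMultiplicity_iff (a := 2)).mpr ⟨by decide, hn⟩
  exact hk (h (k + 1))

theorem exists_pow_eqOn_of_commute {α : Type*} {g h : Perm α} (hc : Commute g h) {x : α}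
    {S : Set α} (hS : ∀ v ∈ S, ∃ j : ℕ, (h ^ j) x = v) (hx : g x ∈ S) :
    ∃ t : ℕ, ∀ v ∈ S, g v = (h ^ t) v := by
  obtain ⟨t, ht⟩ := hS _ hx
  refine ⟨t, fun v hv => ?_⟩
  obtain ⟨j, rfl⟩ := hS v hv
  rw [← Perm.mul_apply, (hc.pow_right j).eq, Perm.mul_apply, ← ht, ← Perm.mul_apply,
    ← Perm.mul_apply, ← pow_add, ← pow_add, add_comm]

namespace Basilica

inductive Letter
  | a
  | b
  | aInv
  | bInv

namespace Letter

def toPerm : Letter → Perm (List Bool)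
  | a => aP
  | b => bP
  | aInv => aP⁻¹
  | bInv => bP⁻¹

def inv : Letter → Letter
  | a => aInv
  | b => bInv
  | aInv => a
  | bInv => b

def swapsRoot : Letter → Bool
  | a | aInv => false
  | b | bInv => true

def weight : Letter → ℤ × ℤ
  | a => (1, 0)
  | b => (0, 1)
  | aInv => (-1, 0)
  | bInv => (0, -1)

/-- The section of `l` at the first-level vertex `i`, written as a word in the generators. -/
def sec : Letter → Bool → List Letter
  | a, false | aInv, false | b, true | bInv, false => []
  | a, true => [b]
  | aInv, true => [bInv]
  | b, false => [a]
  | bInv, true => [aInv]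

theorem toPerm_inv (l : Letter) : l.inv.toPerm = l.toPerm⁻¹ := by
  cases l <;> simp [inv, toPerm]

theorem toPerm_mem (l : Letter) : l.toPerm ∈ BasilicaGroup := by
  have ha : aP ∈ BasilicaGroup := Subgroup.subset_closure (by simp)
  have hb : bP ∈ BasilicaGroup := Subgroup.subset_closure (by simp)
  cases l
  exacts [ha, hb, inv_mem ha, inv_mem hb]

end Letter

abbrev Word := List Letter

def eval (w : Word) : Perm (List Bool) := (w.map Letter.toPerm).prod

def invWord (w : Word) : Word := (w.map Letter.inv).reverse

def weight (w : Word) : ℤ × ℤ := (w.map Letter.weight).sum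

def parity : Word → Bool
  | [] => false
  | l :: w => xor l.swapsRoot (parity w)

def sec (i : Bool) : Word → Word
  | [] => []
  | l :: w => l.sec (xor i (parity w)) ++ sec i w

@[simp] theorem eval_nil : eval [] = 1 := rfl

@[simp] theorem eval_cons (l : Letter) (w : Word) : eval (l :: w) = l.toPerm * eval w := by
  simp [eval]

@[simp] theorem eval_append (u v : Word) : eval (u ++ v) = eval u * eval v := by
  simp [eval]

@[simp] theorem eval_invWord (w : Word) : eval (invWord w) = (eval w)⁻¹ := by
  induction w with
  | nil => rfl
  | cons l w ih => simp_all [invWord, Letter.toPerm_inv]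

@[simp] theorem eval_flatten_replicate (t : ℕ) (w : Word) :
    eval (List.replicate t w).flatten = eval w ^ t := by
  induction t with
  | zero => rfl
  | succ t ih => rw [List.replicate_succ, List.flatten_cons, eval_append, ih, pow_succ']

@[simp] theorem weight_nil : weight [] = 0 := rfl

@[simp] theorem weight_append (u v : Word) : weight (u ++ v) = weight u + weight v := by
  simp [weight]

@[simp] theorem weight_invWord (w : Word) : weight (invWord w) = -weight w := by
  induction w with
  | nil => rfl
  | cons l w ih =>
    rw [invWord, List.map_cons, List.reverse_cons, ← invWord, weight_append, ih]
    cases l <;> simp [weight, Letter.inv, Letter.weight, add_comm]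

@[simp] theorem weight_flatten_replicate (t : ℕ) (w : Word) :
    weight (List.replicate t w).flatten = t • weight w := by
  induction t with
  | zero => simp [weight]
  | succ t ih => rw [List.replicate_succ, List.flatten_cons, weight_append, ih, succ_nsmul']


theorem exists_eval_eq {g : Perm (List Bool)} (hg : g ∈ BasilicaGroup) : ∃ w, eval w = g := by
  induction hg using Subgroup.closure_induction with
  | mem g hg =>
    rcases hg with rfl | rfl
    exacts [⟨[.a], mul_one _⟩, ⟨[.b], mul_one _⟩]
  | one => exact ⟨[], rfl⟩
  | mul g h _ _ hg hh =>
    obtain ⟨u, rfl⟩ := hg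
    obtain ⟨v, rfl⟩ := hh
    exact ⟨u ++ v, eval_append u v⟩
  | inv g _ hg =>
    obtain ⟨u, rfl⟩ := hg
    exact ⟨invWord u, eval_invWord u⟩

theorem parity_append (u v : Word) : parity (u ++ v) = xor (parity u) (parity v) := by
  induction u with
  | nil => simp [parity]
  | cons l u ih => simp [parity, ih]

theorem sec_append (i : Bool) (u v : Word) :
    sec i (u ++ v) = sec (xor i (parity v)) u ++ sec i v := by
  induction u with
  | nil => rfl
  | cons l u ih =>
    rw [List.cons_append, sec, sec, ih, parity_append, ← Bool.xor_assoc, Bool.xor_right_comm,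
      List.append_assoc]

theorem Letter.toPerm_apply_cons (l : Letter) (i : Bool) (u : List Bool) :
    l.toPerm (i :: u) = xor i l.swapsRoot :: eval (l.sec i) u := by
  cases l <;> cases i <;>
    simp [toPerm, swapsRoot, Letter.sec, aP, bP, aF, bF, aI, bI, Perm.inv_def]

theorem eval_apply_cons (w : Word) (i : Bool) (u : List Bool) :
    eval w (i :: u) = xor i (parity w) :: eval (sec i w) u := by
  induction w generalizing u with
  | nil => simp [parity, sec]
  | cons l w ih =>
    simp [Perm.mul_apply, ih, Letter.toPerm_apply_cons, sec, parity, Bool.xor_comm l.swapsRoot]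

@[simp] theorem eval_apply_nil (w : Word) : eval w [] = [] := by
  induction w with
  | nil => rfl
  | cons l w ih => cases l <;> simp [ih, Letter.toPerm, aP, bP, aF, bF, aI, bI, Perm.inv_def]

@[simp] theorem length_eval_apply (w : Word) (v : List Bool) : (eval w v).length = v.length := by
  induction v generalizing w with
  | nil => simp
  | cons i u ih => simp [eval_apply_cons, ih]

theorem eval_sec_eq_of_eval_eq {u v : Word} (h : eval u = eval v) (i : Bool) :
    eval (sec i u) = eval (sec i v) := by
  ext x : 1
  have := congrArg (· (i :: x)) h
  simp only [eval_apply_cons] at this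
  exact (List.cons.inj this).2

theorem length_sec_add (w : Word) : (sec false w).length + (sec true w).length = w.length := by
  induction w with
  | nil => rfl
  | cons l w ih =>
    simp only [sec, List.length_append, List.length_cons]
    cases l <;> cases parity w <;> simp [Letter.sec] <;> omega

theorem weight_sec_add (w : Word) :
    weight (sec false w) + weight (sec true w) = (weight w).swap := by
  induction w with
  | nil => rfl
  | cons l w ih =>
    simp only [sec, weight, List.map_cons, List.sum_cons] at ih ⊢
    rw [Prod.swap_add, ← ih]
    cases l <;> cases parity w <;> simp [Letter.sec, Letter.weight] <;> abel

/-- Each `b^{±1}` puts an `a^{±1}` into one of the two sections, which one being decided by the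
parity of the letters after it. -/
theorem weight_sec_fst_sub (w : Word) :
    (weight (sec false w)).1 - (weight (sec true w)).1 = (parity w).toNat := by
  induction w with
  | nil => rfl
  | cons l w ih =>
    simp only [sec, parity, weight_append, Prod.fst_add]
    cases l <;> cases h : parity w <;>
      simp_all [Letter.sec, Letter.swapsRoot, weight, Letter.weight] <;> omega

theorem weight_fst_eq (w : Word) :
    (weight w).1 = (weight (sec false w)).2 + (weight (sec true w)).2 := by
  simpa using congrArg Prod.snd (weight_sec_add w).symm

theorem weight_snd_eq_two_mul {w : Word} (h : parity w = false) (i : Bool) :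
    (weight w).2 = 2 * (weight (sec i w)).1 := by
  have hsum := congrArg Prod.fst (weight_sec_add w)
  have hlink := weight_sec_fst_sub w
  simp only [Prod.fst_add, Prod.fst_swap, h, Bool.toNat_false] at hsum hlink
  cases i <;> omega

def FixesLevel (n : ℕ) (g : Perm (List Bool)) : Prop :=
  ∀ v : List Bool, v.length = n → g v = v

theorem FixesLevel.sec {n : ℕ} {w : Word} (h : FixesLevel (n + 1) (eval w)) (i : Bool) :
    FixesLevel n (eval (Basilica.sec i w)) := fun u hu => by
  have := h (i :: u) (by simp [hu])
  rw [eval_apply_cons] at this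
  exact (List.cons.inj this).2

theorem FixesLevel.parity_eq_false {n : ℕ} {w : Word} (h : FixesLevel (n + 1) (eval w)) :
    parity w = false := by
  have := h (false :: List.replicate n false) (by simp)
  rw [eval_apply_cons] at this
  simpa using (List.cons.inj this).1

theorem two_pow_dvd_weight_of_fixesLevel :
    ∀ {k : ℕ} {w : Word}, FixesLevel (2 * k) (eval w) →
      (2 : ℤ) ^ k ∣ (weight w).1 ∧ (2 : ℤ) ^ k ∣ (weight w).2
  | 0, _, _ => by simp
  | k + 1, w, h => by
    have hsec (i : Bool) : FixesLevel (2 * k + 1) (eval (sec i w)) := h.sec i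
    have ih (i j : Bool) := two_pow_dvd_weight_of_fixesLevel ((hsec i).sec j)
    rw [weight_fst_eq, weight_snd_eq_two_mul h.parity_eq_false false, weight_fst_eq (sec false w),
      weight_snd_eq_two_mul (hsec false).parity_eq_false false,
      weight_snd_eq_two_mul (hsec true).parity_eq_false false, pow_succ']
    exact ⟨dvd_add (mul_dvd_mul_left 2 (ih false false).1) (mul_dvd_mul_left 2 (ih true false).1),
      mul_dvd_mul_left 2 (dvd_add (ih false false).2 (ih false true).2)⟩

theorem weight_eq_zero_of_eval_eq_one {w : Word} (h : eval w = 1) : weight w = 0 := by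
  have hdvd (k : ℕ) := two_pow_dvd_weight_of_fixesLevel (k := k) (w := w) (by simp [FixesLevel, h])
  exact Prod.ext (eq_zero_of_forall_two_pow_dvd fun k => (hdvd k).1)
    (eq_zero_of_forall_two_pow_dvd fun k => (hdvd k).2)

theorem weight_eq_of_eval_eq {u v : Word} (h : eval u = eval v) : weight u = weight v := by
  have := weight_eq_zero_of_eval_eq_one (w := u ++ invWord v) (by simp [h])
  rwa [weight_append, weight_invWord, ← sub_eq_add_neg, sub_eq_zero] at this

noncomputable def weightOf (g : BasilicaGroup) : ℤ × ℤ := weight (exists_eval_eq g.2).choose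

theorem weightOf_eq {g : BasilicaGroup} {w : Word} (hw : eval w = g) : weightOf g = weight w :=
  weight_eq_of_eval_eq ((exists_eval_eq g.2).choose_spec.trans hw.symm)

noncomputable def weightHom : BasilicaGroup →* Multiplicative (ℤ × ℤ) where
  toFun g := .ofAdd (weightOf g)
  map_one' := congrArg _ (weightOf_eq (w := []) rfl)
  map_mul' g h := by
    obtain ⟨u, hu⟩ := exists_eval_eq g.2
    obtain ⟨v, hv⟩ := exists_eval_eq h.2
    rw [weightOf_eq (w := u ++ v) (by simp [hu, hv]), weightOf_eq hu, weightOf_eq hv,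
      weight_append, ofAdd_add]

theorem weightHom_surjective : Function.Surjective weightHom := by
  intro p
  let α : BasilicaGroup := ⟨aP, Letter.toPerm_mem .a⟩
  let β : BasilicaGroup := ⟨bP, Letter.toPerm_mem .b⟩
  have hα : weightHom α = .ofAdd (1, 0) :=
    congrArg Multiplicative.ofAdd (weightOf_eq (w := [.a]) (mul_one _))
  have hβ : weightHom β = .ofAdd (0, 1) :=
    congrArg Multiplicative.ofAdd (weightOf_eq (w := [.b]) (mul_one _))
  refine ⟨α ^ p.toAdd.1 * β ^ p.toAdd.2, ?_⟩
  rw [map_mul, map_zpow, map_zpow, hα, hβ, ← ofAdd_zsmul, ← ofAdd_zsmul, ← ofAdd_add]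
  ext <;> simp

/-- For odd `w`, the section of `w²` at `0`: the first-return map of `w` on that subtree. -/
def firstReturn (w : Word) : Word := sec true w ++ sec false w

theorem length_firstReturn (w : Word) : (firstReturn w).length = w.length := by
  rw [firstReturn, List.length_append, add_comm, length_sec_add]

theorem weight_firstReturn (w : Word) : weight (firstReturn w) = (weight w).swap := by
  rw [firstReturn, weight_append, add_comm, weight_sec_add]

theorem sec_false_append_self {w : Word} (h : parity w = true) :
    sec false (w ++ w) = firstReturn w := by
  rw [sec_append, h, Bool.false_xor, firstReturn]

theorem eval_sec_mul_eval_sec_of_commute {u v : Word} (hc : Commute (eval u) (eval v)) (i : Bool) :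
    eval (sec (xor i (parity v)) u) * eval (sec i v) =
      eval (sec (xor i (parity u)) v) * eval (sec i u) := by
  simpa [sec_append] using eval_sec_eq_of_eval_eq (u := u ++ v) (v := v ++ u) (by simp [hc.eq]) i

theorem commute_eval_sec {u v : Word} (hc : Commute (eval u) (eval v)) (hu : parity u = false)
    (hv : parity v = false) (i : Bool) : Commute (eval (sec i u)) (eval (sec i v)) := by
  show _ * _ = _ * _
  simpa [hu, hv] using eval_sec_mul_eval_sec_of_commute hc i

def WedgeVanishesBelow (n : ℕ) : Prop :=
  ∀ u₁ u₂ : Word, u₁.length + u₂.length < n → Commute (eval u₁) (eval u₂) →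
    wedge (weight u₁) (weight u₂) = 0

section Induction

variable {w₁ w₂ : Word} (ih : WedgeVanishesBelow (w₁.length + w₂.length))
  (hc : Commute (eval w₁) (eval w₂))
include ih hc

theorem wedge_eq_zero_of_parity_false_false (h₁ : parity w₁ = false) (h₂ : parity w₂ = false) :
    wedge (weight w₁) (weight w₂) = 0 := by
  have a0 := weight_snd_eq_two_mul h₁ false
  have a1 := weight_snd_eq_two_mul h₁ true
  have b0 := weight_snd_eq_two_mul h₂ false
  have b1 := weight_snd_eq_two_mul h₂ true
  by_cases h0 : sec false w₁ = [] ∧ sec false w₂ = []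
  · simp [wedge, a0, b0, h0.1, h0.2]
  by_cases h1 : sec true w₁ = [] ∧ sec true w₂ = []
  · simp [wedge, a1, b1, h1.1, h1.2]
  simp only [not_and_or, ← List.length_pos_iff_ne_nil] at h0 h1
  have hlen₁ := length_sec_add w₁
  have hlen₂ := length_sec_add w₂
  have e0 := ih _ _ (by omega) (commute_eval_sec hc h₁ h₂ false)
  have e1 := ih _ _ (by omega) (commute_eval_sec hc h₁ h₂ true)
  -- as `(weight w).2 = 2 * (weight (sec i w)).1` for both `i`, the wedge of `w₁, w₂` is
  -- `-2` times the sum of the wedges of their sections at `false` and at `true`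
  simp only [wedge] at e0 e1 ⊢
  rw [weight_fst_eq w₁, weight_fst_eq w₂]
  linear_combination (-2) * e0 - 2 * e1 + (weight (sec false w₁)).2 * b0
    + (weight (sec true w₁)).2 * b1 - (weight (sec false w₂)).2 * a0 - (weight (sec true w₂)).2 * a1

theorem wedge_eq_zero_of_parity_false_true (h₁ : parity w₁ = false) (h₂ : parity w₂ = true) :
    wedge (weight w₁) (weight w₂) = 0 := by
  have r0 := eval_sec_mul_eval_sec_of_commute hc false
  have r1 := eval_sec_mul_eval_sec_of_commute hc true
  simp only [h₁, h₂, Bool.xor_false, Bool.xor_true, Bool.not_false, Bool.not_true] at r0 r1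
  -- `r0` says that the two sections of `w₁` are conjugate, so they have the same weight
  have hconj : weight (sec true w₁) = weight (sec false w₁) := by
    simpa using weight_eq_of_eval_eq (u := sec true w₁)
      (v := sec false w₂ ++ sec false w₁ ++ invWord (sec false w₂))
      (by rw [eval_append, eval_append, eval_invWord, ← r0, mul_inv_cancel_right])
  have hw₁ : (weight w₁).swap = weight (sec false w₁) + weight (sec false w₁) := by
    rw [← weight_sec_add, hconj]
  have hw₂ : (weight w₂).swap = weight (firstReturn w₂) := (weight_firstReturn w₂).symm
  rw [← neg_eq_zero, ← wedge_swap, hw₁, hw₂]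
  by_cases hnil : sec true w₁ = []
  · simp [← hconj, hnil, wedge]
  have hlt : (sec false w₁).length + (firstReturn w₂).length < w₁.length + w₂.length := by
    have := length_sec_add w₁
    have := List.length_pos_iff.mpr hnil
    rw [length_firstReturn]
    omega
  have hcomm : Commute (eval (sec false w₁)) (eval (firstReturn w₂)) := by
    show _ * _ = _ * _
    rw [firstReturn, eval_append, ← mul_assoc, r1, mul_assoc, r0, ← mul_assoc]
  have := ih _ _ hlt hcomm
  simp only [wedge, Prod.fst_add, Prod.snd_add] at this ⊢
  linear_combination 2 * this

theorem wedge_eq_zero_of_parity_false (h₁ : parity w₁ = false) :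
    wedge (weight w₁) (weight w₂) = 0 := by
  cases h₂ : parity w₂
  · exact wedge_eq_zero_of_parity_false_false ih hc h₁ h₂
  · exact wedge_eq_zero_of_parity_false_true ih hc h₁ h₂

end Induction

theorem commute_eval_firstReturn {w₁ w₂ : Word} (hc : Commute (eval w₁) (eval w₂))
    (h₁ : parity w₁ = true) (h₂ : parity w₂ = true) :
    Commute (eval (firstReturn w₁)) (eval (firstReturn w₂)) := by
  rw [← sec_false_append_self h₁, ← sec_false_append_self h₂]
  exact commute_eval_sec (by simpa [sq] using hc.pow_pow 2 2) (by simp [parity_append])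
    (by simp [parity_append]) false

theorem wedge_eq_zero_of_iterate_parity_false (i : ℕ) {w₁ w₂ : Word}
    (ih : WedgeVanishesBelow (w₁.length + w₂.length)) (hc : Commute (eval w₁) (eval w₂))
    (hi : parity (firstReturn^[i] w₁) = false) : wedge (weight w₁) (weight w₂) = 0 := by
  induction i generalizing w₁ w₂ with
  | zero => exact wedge_eq_zero_of_parity_false ih hc hi
  | succ i ihi =>
    cases h₁ : parity w₁
    · exact wedge_eq_zero_of_parity_false ih hc h₁
    cases h₂ : parity w₂
    · rw [wedge_comm, neg_eq_zero]
      exact wedge_eq_zero_of_parity_false (by rwa [add_comm]) hc.symm h₂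
    have := ihi (by rwa [length_firstReturn, length_firstReturn])
      (commute_eval_firstReturn hc h₁ h₂) hi
    rwa [weight_firstReturn, weight_firstReturn, wedge_swap, neg_eq_zero] at this

theorem eval_pow_apply_cons {w : Word} (h : parity w = false) (j : ℕ) (i : Bool)
    (u : List Bool) : (eval w ^ j) (i :: u) = i :: (eval (sec i w) ^ j) u := by
  induction j generalizing u with
  | zero => rfl
  | succ j ih =>
    rw [pow_succ, Perm.mul_apply, eval_apply_cons, h, Bool.xor_false, ih, pow_succ,
      Perm.mul_apply]

theorem exists_pow_apply_replicate_eq {w : Word} (hodd : ∀ i, parity (firstReturn^[i] w) = true)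
    {n : ℕ} {v : List Bool} (hv : v.length = n) :
    ∃ j : ℕ, (eval w ^ j) (List.replicate n false) = v := by
  induction n generalizing w v with
  | zero => exact ⟨0, by simp_all⟩
  | succ n ih =>
    obtain _ | ⟨x, v⟩ := v
    · simp at hv
    have hw : parity w = true := hodd 0
    have hsq (j : ℕ) (u : List Bool) :
        (eval w ^ (2 * j)) (false :: u) = false :: (eval (firstReturn w) ^ j) u := by
      rw [pow_mul, sq, ← eval_append, eval_pow_apply_cons (by simp [parity_append]),
        sec_false_append_self hw]
    cases x
    · obtain ⟨j, hj⟩ := ih (fun i => hodd (i + 1)) (v := v) (by simpa using hv)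
      exact ⟨2 * j, by rw [List.replicate_succ, hsq, hj]⟩
    · obtain ⟨j, hj⟩ := ih (fun i => hodd (i + 1)) (v := (eval (sec false w))⁻¹ v)
        (by simpa [← eval_invWord] using hv)
      refine ⟨2 * j + 1, ?_⟩
      rw [pow_succ', Perm.mul_apply, List.replicate_succ, hsq, hj, eval_apply_cons, hw]
      simp

theorem wedge_eq_zero_of_odometer {w₁ w₂ : Word} (hodd : ∀ i, parity (firstReturn^[i] w₁) = true)
    (hc : Commute (eval w₁) (eval w₂)) : wedge (weight w₁) (weight w₂) = 0 := by
  refine eq_zero_of_forall_two_pow_dvd fun k => ?_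
  obtain ⟨t, ht⟩ := exists_pow_eqOn_of_commute hc.symm (S := {v | v.length = 2 * k})
    (fun v hv => exists_pow_apply_replicate_eq hodd hv) (by simp)
  -- `u` represents `w₂ w₁⁻ᵗ`, which fixes the level `2k`
  set u := w₂ ++ invWord (List.replicate t w₁).flatten
  have hfix : FixesLevel (2 * k) (eval u) := fun v hv => by
    have hv' : ((eval w₁ ^ t)⁻¹ v).length = 2 * k := by
      rw [← eval_flatten_replicate, ← eval_invWord, length_eval_apply, hv]
    rw [eval_append, eval_invWord, eval_flatten_replicate, Perm.mul_apply, ht _ hv',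
      Perm.inv_def, apply_symm_apply]
  obtain ⟨h1, h2⟩ := two_pow_dvd_weight_of_fixesLevel hfix
  have hwedge : wedge (weight w₁) (weight w₂) =
      (weight w₁).1 * (weight u).2 - (weight w₁).2 * (weight u).1 := by
    simp [u, wedge]
    ring
  rw [hwedge]
  exact dvd_sub (dvd_mul_of_dvd_right h2 _) (dvd_mul_of_dvd_right h1 _)

theorem wedge_weight_eq_zero_of_commute {w₁ w₂ : Word} (hc : Commute (eval w₁) (eval w₂)) :
    wedge (weight w₁) (weight w₂) = 0 := by
  induction hn : w₁.length + w₂.length using Nat.strong_induction_on generalizing w₁ w₂ with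
  | _ n ih =>
    by_cases hodd : ∀ i, parity (firstReturn^[i] w₁) = true
    · exact wedge_eq_zero_of_odometer hodd hc
    obtain ⟨i, hi⟩ := not_forall.mp hodd
    exact wedge_eq_zero_of_iterate_parity_false i
      (fun u₁ u₂ hlt hc' => ih _ (hn ▸ hlt) hc' rfl) hc (by simpa using hi)

theorem wedge_weightHom_eq_zero_of_commute {g h : BasilicaGroup} (hc : Commute g h) :
    wedge (weightHom g).toAdd (weightHom h).toAdd = 0 := by
  obtain ⟨u, hu⟩ := exists_eval_eq g.2
  obtain ⟨v, hv⟩ := exists_eval_eq h.2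
  rw [show (weightHom g).toAdd = weight u from weightOf_eq hu,
    show (weightHom h).toAdd = weight v from weightOf_eq hv]
  exact wedge_weight_eq_zero_of_commute (by rw [hu, hv]; exact congrArg Subtype.val hc.eq)

end Basilica

section Tree

variable {A : ℕ → Type}

theorem IsPref.eq_of_fst_eq {v w u : Vertex A} (hv : IsPref A v u) (hw : IsPref A w u)
    (h : v.1 = w.1) : v = w := by
  obtain ⟨n, f⟩ := v
  obtain ⟨m, g⟩ := w
  obtain rfl : n = m := h
  obtain ⟨_, hf⟩ := hv
  obtain ⟨_, hg⟩ := hw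
  congr
  funext i
  exact (hf i).trans (hg i).symm

theorem Vertex.exists_pair_ne_level_one [Nontrivial (A 0)] :
    ∃ v w : Vertex A, v.1 = 1 ∧ w.1 = 1 ∧ v ≠ w := by
  obtain ⟨a, b, hab⟩ := exists_pair_ne (A 0)
  refine ⟨⟨1, Fin.cons a finZeroElim⟩, ⟨1, Fin.cons b finZeroElim⟩, rfl, rfl, fun h => hab ?_⟩
  exact Fin.cons_left_injective _ (sigma_mk_injective h)

variable {G : Subgroup (Perm (Vertex A))}

theorem commute_of_mem_rist {v w : Vertex A} (hvw : v ≠ w) (h : v.1 = w.1)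
    {x y : Perm (Vertex A)} (hx : x ∈ rist A G v) (hy : y ∈ rist A G w) : Commute x y := by
  refine Perm.Disjoint.commute fun u => ?_
  by_cases hu : IsPref A v u
  · exact Or.inr (hy.2 u fun hwu => hvw (hu.eq_of_fst_eq hwu h))
  · exact Or.inl (hx.2 u hu)

theorem conj_mem_rist (hG : G ≤ treeAut A) {g z : Perm (Vertex A)} (hg : g ∈ G) {v : Vertex A}
    (hz : z ∈ rist A G v) : g * z * g⁻¹ ∈ rist A G (g v) := by
  refine ⟨G.mul_mem (G.mul_mem hg hz.1) (G.inv_mem hg), fun u hu => ?_⟩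
  have : ¬ IsPref A v (g⁻¹ u) := fun h => hu (by simpa using (hG hg v (g⁻¹ u)).mp h)
  rw [Perm.mul_apply, Perm.mul_apply, hz.2 _ this, Perm.inv_def, apply_symm_apply]

variable {C : Type*} [CommGroup C]

theorem map_rist_le_of_sphTrans (hG : G ≤ treeAut A) (htrans : SphTrans A G) (Φ : G →* C)
    {v w : Vertex A} (h : v.1 = w.1) :
    ((rist A G v).subgroupOf G).map Φ ≤ ((rist A G w).subgroupOf G).map Φ := by
  rintro _ ⟨x, hx, rfl⟩
  obtain ⟨g, hg, rfl⟩ := htrans v w h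
  refine ⟨⟨g, hg⟩ * x * ⟨g, hg⟩⁻¹, conj_mem_rist hG hg hx, ?_⟩
  simp [mul_comm]

theorem map_rist_eq_of_sphTrans (hG : G ≤ treeAut A) (htrans : SphTrans A G) (Φ : G →* C)
    {v w : Vertex A} (h : v.1 = w.1) :
    ((rist A G v).subgroupOf G).map Φ = ((rist A G w).subgroupOf G).map Φ :=
  le_antisymm (map_rist_le_of_sphTrans hG htrans Φ h) (map_rist_le_of_sphTrans hG htrans Φ h.symm)

theorem index_map_rist_ne_zero (hG : G ≤ treeAut A) (htrans : SphTrans A G) {n : ℕ}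
    (hn : (ristLevel A G n).relIndex G ≠ 0) {Φ : G →* C} (hΦ : Function.Surjective Φ)
    {v : Vertex A} (hv : v.1 = n) : (((rist A G v).subgroupOf G).map Φ).index ≠ 0 := by
  set L := ((rist A G v).subgroupOf G).map Φ
  have hle : (ristLevel A G n).subgroupOf G ≤ L.comap Φ := by
    rw [← Subgroup.map_subtype_le_map_subtype, Subgroup.subgroupOf_map_subtype]
    refine inf_le_left.trans (iSup₂_le fun w hw x hx => ⟨⟨x, hx.1⟩, ?_, rfl⟩)
    exact map_rist_le_of_sphTrans hG htrans Φ (hw.trans hv.symm) ⟨⟨x, hx.1⟩, hx, rfl⟩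
  rw [← Subgroup.index_comap_of_surjective L hΦ]
  exact ne_zero_of_dvd_ne_zero hn (Subgroup.index_dvd_of_le hle)

end Tree

/-- The Basilica group is not a branch group: no branch group
on any spherically homogeneous rooted tree is isomorphic to it. -/
theorem basilica_not_branch :
    ¬ ∃ (A : ℕ → Type) (G : Subgroup (Perm (Vertex A))),
      (∀ i, Finite (A i)) ∧ (∀ i, 2 ≤ Nat.card (A i)) ∧ IsBranch A G ∧
        Nonempty (↥G ≃* ↥BasilicaGroup) := by
  rintro ⟨A, G, hfin, hcard, ⟨⟨hG, htrans, -⟩, hindex⟩, ⟨e⟩⟩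
  have : Nontrivial (A 0) := (@Finite.one_lt_card_iff_nontrivial _ (hfin 0)).mp (hcard 0)
  obtain ⟨v, w, hv, hw, hvw⟩ := Vertex.exists_pair_ne_level_one (A := A)
  have hvw₁ : v.1 = w.1 := hv.trans hw.symm
  let Φ := Basilica.weightHom.comp e.toMonoidHom
  have hΦ : Function.Surjective Φ := Basilica.weightHom_surjective.comp e.surjective
  obtain ⟨_, ⟨x, hx, rfl⟩, _, hy, hxy⟩ :=
    exists_wedge_ne_zero_of_index_ne_zero (index_map_rist_ne_zero hG htrans (hindex 1) hΦ hv)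
  rw [map_rist_eq_of_sphTrans hG htrans Φ hvw₁] at hy
  obtain ⟨y, hy, rfl⟩ := hy
  have hc : Commute x y := Subtype.ext (commute_of_mem_rist hvw hvw₁ hx hy).eq
  exact hxy (Basilica.wedge_weightHom_eq_zero_of_commute (hc.map e))

end PaperDefs
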